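/- arXiv:2205.14661 — 5 statements merged into one kernel-verified Lean document; each statement's English description precedes it below -/
import Mathlib

section
/- Consider local computing of a device with energy budget E > 0 over a frame of duration T > 0, computational energy efficiency γ_c > 0, task intensity C > 0 (CPU cycles per bit), and maximum CPU frequency f_max > 0. For every computing time t ∈ [0, T] and CPU frequency f ∈ [0, f_max] satisfying the energy constraint γ_c·f³·t ≤ E, the number of locally computed bits satisfies t·f/C ≤ T·min((E/(T·γ_c))^{1/3}, f_max)/C. Moreover, the choice t* = T and f* = min((E/(T·γ_c))^{1/3}, f_max) is feasible, i.e., γ_c·(f*)³·T ≤ E and f* ∈ [0, f_max], and it attains this maximum value. -/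
/-!
Writing `A = (E / (T γc))^(1/3)`, the energy constraint reads `f³ t ≤ A³ T`. If `f ≤ A` the
bound `t f ≤ T f` is enough; if `f > A`, then `f² (t f) ≤ A³ T ≤ f² (A T)`, so `t f ≤ T A`.
Either way `t f ≤ T · min A fmax`, and `(T, min A fmax)` spends at most `γc A³ T = E`.
-/

lemma Real.rpow_one_div_three_pow_three {x : ℝ} (hx : 0 ≤ x) : (x ^ ((1 : ℝ) / 3)) ^ 3 = x := by
  simpa using Real.rpow_inv_natCast_pow (n := 3) hx three_ne_zero

lemma mul_le_of_pow_three_mul_le {a t f T : ℝ} (ha : 0 ≤ a) (hT : 0 ≤ T) (haf : a < f)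
    (hcube : f ^ 3 * t ≤ a ^ 3 * T) : t * f ≤ T * a := by
  have hf : 0 < f := ha.trans_lt haf
  refine le_of_mul_le_mul_right ?_ (pow_pos hf 2)
  have hsq : a ^ 2 ≤ f ^ 2 := pow_le_pow_left₀ ha haf.le 2
  calc t * f * f ^ 2 = f ^ 3 * t := by ring
    _ ≤ a ^ 3 * T := hcube
    _ = a ^ 2 * (a * T) := by ring
    _ ≤ f ^ 2 * (a * T) := mul_le_mul_of_nonneg_right hsq (mul_nonneg ha hT)
    _ = T * a * f ^ 2 := by ring

lemma mul_le_mul_min_of_pow_three_mul_le {a b t f T : ℝ} (ha : 0 ≤ a) (ht : 0 ≤ t) (htT : t ≤ T)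
    (hf : 0 ≤ f) (hfb : f ≤ b) (hcube : f ^ 3 * t ≤ a ^ 3 * T) : t * f ≤ T * min a b := by
  have hT : 0 ≤ T := ht.trans htT
  rcases le_or_gt f a with hfa | haf
  · calc t * f ≤ T * f := mul_le_mul_of_nonneg_right htT hf
      _ ≤ T * min a b := mul_le_mul_of_nonneg_left (le_min hfa hfb) hT
  · rw [min_eq_left (haf.le.trans hfb)]
    exact mul_le_of_pow_three_mul_le ha hT haf hcube

/-- Lemma 1: optimal local computing time and frequency.
With energy budget `E > 0`, frame duration `T > 0`, computational energy
efficiency `γc > 0`, task intensity `C > 0` and maximum CPU frequency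
`fmax > 0`: every feasible `(t, f)` yields at most `T * min ((E/(T*γc))^(1/3)) fmax / C`
locally computed bits, the choice `t* = T`, `f* = min ((E/(T*γc))^(1/3)) fmax`
is feasible, and it attains this maximum value. -/
theorem stmt0 (E T γc C fmax : ℝ) (hE : 0 < E) (hT : 0 < T) (hγ : 0 < γc)
    (hC : 0 < C) (hf : 0 < fmax) :
    (∀ t f : ℝ, 0 ≤ t → t ≤ T → 0 ≤ f → f ≤ fmax → γc * f ^ 3 * t ≤ E →
      t * f / C ≤ T * min ((E / (T * γc)) ^ ((1 : ℝ) / 3)) fmax / C) ∧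
    (γc * (min ((E / (T * γc)) ^ ((1 : ℝ) / 3)) fmax) ^ 3 * T ≤ E ∧
      0 ≤ min ((E / (T * γc)) ^ ((1 : ℝ) / 3)) fmax ∧
      min ((E / (T * γc)) ^ ((1 : ℝ) / 3)) fmax ≤ fmax) ∧
    T * (min ((E / (T * γc)) ^ ((1 : ℝ) / 3)) fmax) / C =
      T * min ((E / (T * γc)) ^ ((1 : ℝ) / 3)) fmax / C := by
  set A := (E / (T * γc)) ^ ((1 : ℝ) / 3)
  have hA : 0 ≤ A := by positivity
  have hbudget : γc * A ^ 3 * T = E := by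
    rw [Real.rpow_one_div_three_pow_three (by positivity)]
    field_simp
  refine ⟨fun t f ht htT hf0 hfmax henergy => ?_, ⟨?_, le_min hA hf.le, min_le_right _ _⟩, rfl⟩
  · have hcube : f ^ 3 * t ≤ A ^ 3 * T := by
      refine le_of_mul_le_mul_left ?_ hγ
      linarith
    exact div_le_div_of_nonneg_right
      (mul_le_mul_min_of_pow_three_mul_le hA ht htT hf0 hfmax hcube) hC.le
  · calc γc * (min A fmax) ^ 3 * T ≤ γc * A ^ 3 * T := by
          gcongr
          exact min_le_left _ _
      _ = E := hbudget
end

section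
/- Let K be a finite index set, let T > 0, and for each k ∈ K let c_k ≥ 0 and τ_k > 0 with Σ_{k∈K} τ_k ≤ T. Then Σ_{k∈K} τ_k·log₂(1 + c_k/τ_k) ≤ T·log₂(1 + (Σ_{k∈K} c_k)/T). -/
/-!
The map `(τ, c) ↦ τ · g (c / τ)` is the perspective of `g`. For `g` concave on `[0, ∞)` with
`g 0 ≥ 0`, Jensen's inequality with weights `τ_k / T` at the points `c_k / τ_k`, plus the leftover
weight `1 - Σ τ_k / T` at the point `0`, bounds `Σ τ_k g (c_k / τ_k)` by `T g (Σ c_k / T)`.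
The theorem is the case `g x = log₂ (1 + x)`.
-/

open Finset Set Real

theorem ConcaveOn.sum_mul_apply_div_le {ι : Type*} {g : ℝ → ℝ} (hg : ConcaveOn ℝ (Ici 0) g)
    (hg₀ : 0 ≤ g 0) (K : Finset ι) {T : ℝ} (hT : 0 < T) {c τ : ι → ℝ}
    (hc : ∀ k ∈ K, 0 ≤ c k) (hτ : ∀ k ∈ K, 0 < τ k) (hsum : ∑ k ∈ K, τ k ≤ T) :
    ∑ k ∈ K, τ k * g (c k / τ k) ≤ T * g ((∑ k ∈ K, c k) / T) := by
  have hw : ∀ k ∈ K, 0 ≤ τ k / T := fun k hk => div_nonneg (hτ k hk).le hT.le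
  have hws : ∑ k ∈ K, τ k / T ≤ 1 := by rwa [← sum_div, div_le_one hT]
  have jensen := hg.map_add_sum_le hw (by ring : (1 - ∑ k ∈ K, τ k / T) + _ = 1)
    (fun k hk => div_nonneg (hc k hk) (hτ k hk).le) (sub_nonneg.2 hws) self_mem_Ici
  have hpoint : ∑ k ∈ K, (τ k / T) • (c k / τ k) = (∑ k ∈ K, c k) / T := by
    rw [sum_div]
    refine sum_congr rfl fun k hk => ?_
    rw [smul_eq_mul]
    field_simp [(hτ k hk).ne']
  rw [smul_zero, zero_add, hpoint] at jensen
  have hweighted : ∑ k ∈ K, τ k / T * g (c k / τ k) ≤ g ((∑ k ∈ K, c k) / T) :=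
    le_of_add_le_of_nonneg_right jensen (mul_nonneg (sub_nonneg.2 hws) hg₀)
  calc ∑ k ∈ K, τ k * g (c k / τ k) = T * ∑ k ∈ K, τ k / T * g (c k / τ k) := by
        rw [mul_sum]
        refine sum_congr rfl fun k _ => ?_
        field_simp
    _ ≤ T * g ((∑ k ∈ K, c k) / T) := mul_le_mul_of_nonneg_left hweighted hT.le

theorem concaveOn_logb_one_add {b : ℝ} (hb : 1 < b) :
    ConcaveOn ℝ (Ici 0) fun x => logb b (1 + x) := by
  have hlog := (strictConcaveOn_log_Ioi.concaveOn.translate_right 1).smul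
    (inv_nonneg.2 (log_nonneg hb.le))
  have hsub : Ici (0 : ℝ) ⊆ (fun z => 1 + z) ⁻¹' Ioi 0 := fun x (hx : 0 ≤ x) => by
    change 0 < 1 + x
    linarith
  refine (hlog.subset hsub (convex_Ici 0)).congr fun x _ => ?_
  simp [logb, div_eq_inv_mul]

/-- Optimal value bound for the offloading time-allocation problem:
`Σ_k τ_k·log₂(1 + c_k/τ_k) ≤ T·log₂(1 + (Σ_k c_k)/T)` whenever `τ_k > 0`
and `Σ_k τ_k ≤ T`. -/
theorem stmt4 {ι : Type*} (K : Finset ι) (T : ℝ) (hT : 0 < T) (c τ : ι → ℝ)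
    (hc : ∀ k ∈ K, 0 ≤ c k) (hτ : ∀ k ∈ K, 0 < τ k)
    (hsum : ∑ k ∈ K, τ k ≤ T) :
    ∑ k ∈ K, τ k * Real.logb 2 (1 + c k / τ k) ≤
      T * Real.logb 2 (1 + (∑ k ∈ K, c k) / T) :=
  (concaveOn_logb_one_add one_lt_two).sum_mul_apply_div_le (by simp) K hT hc hτ hsum
end

section
/- Let K be a nonempty finite index set, let T > 0, and for each k ∈ K let c_k > 0. Setting τ_k = T·c_k/(Σ_{j∈K} c_j) for each k, we have τ_k > 0, Σ_{k∈K} τ_k = T, and Σ_{k∈K} τ_k·log₂(1 + c_k/τ_k) = T·log₂(1 + (Σ_{k∈K} c_k)/T). -/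
/-! Under the proportional allocation `τ_k = T c_k / S` (with `S = Σ_j c_j`) every device sees
the same ratio `c_k / τ_k = S / T`, so the rate terms `τ_k f(c_k / τ_k)` share the factor
`f(S / T)` and sum to `(Σ_k τ_k) f(S / T) = T f(S / T)`. -/

open Finset

section ProportionalAllocation

variable {ι : Type*} (K : Finset ι) (T : ℝ) (c : ι → ℝ)

theorem sum_proportional_allocation (hS : ∑ j ∈ K, c j ≠ 0) :
    ∑ k ∈ K, T * c k / ∑ j ∈ K, c j = T := by
  rw [← sum_div, ← mul_sum, mul_div_assoc, div_self hS, mul_one]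

theorem div_proportional_allocation {k : ι} (hk : c k ≠ 0) :
    c k / (T * c k / ∑ j ∈ K, c j) = (∑ j ∈ K, c j) / T := by
  rw [div_div_eq_mul_div, mul_comm T, mul_div_mul_left _ _ hk]

theorem sum_proportional_allocation_mul_perspective (f : ℝ → ℝ)
    (hS : ∑ j ∈ K, c j ≠ 0) (hc : ∀ k ∈ K, c k ≠ 0) :
    ∑ k ∈ K, (T * c k / ∑ j ∈ K, c j) * f (c k / (T * c k / ∑ j ∈ K, c j)) =
      T * f ((∑ j ∈ K, c j) / T) := by
  calc ∑ k ∈ K, (T * c k / ∑ j ∈ K, c j) * f (c k / (T * c k / ∑ j ∈ K, c j))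
      = ∑ k ∈ K, (T * c k / ∑ j ∈ K, c j) * f ((∑ j ∈ K, c j) / T) :=
        sum_congr rfl fun k hk => by rw [div_proportional_allocation K T c (hc k hk)]
    _ = T * f ((∑ j ∈ K, c j) / T) := by
        rw [← sum_mul, sum_proportional_allocation K T c hS]

end ProportionalAllocation

/-- Attainment of the closed-form optimal value: the proportional (equal-SNR)
time allocation `τ_k = T·c_k/(Σ_j c_j)` is feasible and achieves
`T·log₂(1 + (Σ_k c_k)/T)`. -/
theorem stmt5 {ι : Type*} (K : Finset ι) (hK : K.Nonempty) (T : ℝ) (hT : 0 < T)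
    (c : ι → ℝ) (hc : ∀ k ∈ K, 0 < c k) :
    (∀ k ∈ K, 0 < T * c k / (∑ j ∈ K, c j)) ∧
    (∑ k ∈ K, T * c k / (∑ j ∈ K, c j)) = T ∧
    (∑ k ∈ K, (T * c k / (∑ j ∈ K, c j)) *
        Real.logb 2 (1 + c k / (T * c k / (∑ j ∈ K, c j)))) =
      T * Real.logb 2 (1 + (∑ k ∈ K, c k) / T) := by
  have hS : 0 < ∑ j ∈ K, c j := sum_pos hc hK
  refine ⟨fun k hk => div_pos (mul_pos hT (hc k hk)) hS,
    sum_proportional_allocation K T c hS.ne', ?_⟩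
  exact sum_proportional_allocation_mul_perspective K T c (fun x => Real.logb 2 (1 + x))
    hS.ne' fun k hk => (hc k hk).ne'
end

section
/- Let Q be a nonempty finite index set, and let g_q ≥ 0 for q ∈ Q, σ² > 0, E ≥ 0, and τ > 0. For any τ_q > 0 with Σ_{q∈Q} τ_q = τ and any p_q ≥ 0 with Σ_{q∈Q} τ_q·p_q ≤ E, it holds that Σ_{q∈Q} τ_q·log₂(1 + p_q·g_q/σ²) ≤ τ·log₂(1 + E·(max_{q∈Q} g_q)/(τ·σ²)). -/
/-!
Raising every gain `g_q` to the best one `G = max_q g_q` can only increase the rate. Then,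
with the weights `τ_q / τ`, Jensen's inequality for the concave `log₂` bounds
`∑ τ_q log₂(1 + p_q G/σ²)` by `τ log₂` of the weighted mean `1 + (∑ τ_q p_q) G/(τσ²)`,
and the energy budget bounds `∑ τ_q p_q` by `E`.
-/

open Finset Real

theorem Real.concaveOn_logb_Ioi {b : ℝ} (hb : 1 ≤ b) : ConcaveOn ℝ (Set.Ioi 0) (logb b) := by
  have hlogb : logb b = fun x => (log b)⁻¹ • log x :=
    funext fun x => by rw [smul_eq_mul, ← log_div_log, div_eq_inv_mul]
  rw [hlogb]
  exact strictConcaveOn_log_Ioi.concaveOn.smul (inv_nonneg.mpr (log_nonneg hb))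

theorem Real.sum_mul_logb_le_mul_logb_div {ι : Type*} {b : ℝ} (hb : 1 ≤ b) (s : Finset ι)
    {w x : ι → ℝ} (hw : ∀ i ∈ s, 0 ≤ w i) (hx : ∀ i ∈ s, 0 < x i) (hW : 0 < ∑ i ∈ s, w i) :
    ∑ i ∈ s, w i * logb b (x i) ≤
      (∑ i ∈ s, w i) * logb b ((∑ i ∈ s, w i * x i) / ∑ i ∈ s, w i) := by
  set W := ∑ i ∈ s, w i
  have hJensen := (concaveOn_logb_Ioi hb).le_map_sum (t := s) (w := fun i => w i / W) (p := x)
    (fun i hi => div_nonneg (hw i hi) hW.le) (by rw [← sum_div, div_self hW.ne']) hx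
  simp only [smul_eq_mul, div_mul_eq_mul_div, ← sum_div] at hJensen
  rwa [div_le_iff₀' hW] at hJensen

theorem stmt6_general {ι : Type*} (Q : Finset ι) (hQ : Q.Nonempty) (g : ι → ℝ)
    (hg : ∀ q ∈ Q, 0 ≤ g q) (σ2 E τ : ℝ) (hσ : 0 < σ2)
    (hτ : 0 < τ) (τq p : ι → ℝ) (hτq : ∀ q ∈ Q, 0 < τq q)
    (hτsum : ∑ q ∈ Q, τq q = τ) (hp : ∀ q ∈ Q, 0 ≤ p q)
    (hpE : ∑ q ∈ Q, τq q * p q ≤ E) :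
    ∑ q ∈ Q, τq q * Real.logb 2 (1 + p q * g q / σ2) ≤
      τ * Real.logb 2 (1 + E * (Q.sup' hQ g) / (τ * σ2)) := by
  set G := Q.sup' hQ g
  have hG : 0 ≤ G := (hg _ hQ.choose_spec).trans (le_sup' g hQ.choose_spec)
  have hτp : 0 ≤ ∑ q ∈ Q, τq q * p q :=
    sum_nonneg fun q hq => mul_nonneg (hτq q hq).le (hp q hq)
  have hmean : (∑ q ∈ Q, τq q * (1 + p q * G / σ2)) / τ
      = 1 + (∑ q ∈ Q, τq q * p q) * G / (τ * σ2) := by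
    simp only [mul_add, mul_one, sum_add_distrib, hτsum, mul_div_assoc, ← mul_assoc, ← sum_mul]
    field_simp
  calc ∑ q ∈ Q, τq q * logb 2 (1 + p q * g q / σ2)
      ≤ ∑ q ∈ Q, τq q * logb 2 (1 + p q * G / σ2) := by
        gcongr with q hq
        · exact (hτq q hq).le
        · norm_num
        · have := hp q hq; have := hg q hq; positivity
        · exact hp q hq
        · exact le_sup' g hq
    _ ≤ τ * logb 2 (1 + (∑ q ∈ Q, τq q * p q) * G / (τ * σ2)) := by
        rw [← hmean, ← hτsum]
        refine sum_mul_logb_le_mul_logb_div one_le_two Q (fun q hq => (hτq q hq).le)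
          (fun q hq => ?_) (hτsum ▸ hτ)
        have := hp q hq; positivity
    _ ≤ τ * logb 2 (1 + E * G / (τ * σ2)) := by gcongr; norm_num

/-- Core of Lemma 2: a device splitting its time slot `τ` among the `Q` IRS
beamforming vectors, with sub-slot durations `τq` and powers `p` subject to
the energy budget `E`, offloads at most `τ·log₂(1 + E·(max_q g_q)/(τ·σ²))`
bits. -/
theorem stmt6 {ι : Type*} (Q : Finset ι) (hQ : Q.Nonempty) (g : ι → ℝ)
    (hg : ∀ q ∈ Q, 0 ≤ g q) (σ2 E τ : ℝ) (hσ : 0 < σ2) (hE : 0 ≤ E)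
    (hτ : 0 < τ) (τq p : ι → ℝ) (hτq : ∀ q ∈ Q, 0 < τq q)
    (hτsum : ∑ q ∈ Q, τq q = τ) (hp : ∀ q ∈ Q, 0 ≤ p q)
    (hpE : ∑ q ∈ Q, τq q * p q ≤ E) :
    ∑ q ∈ Q, τq q * Real.logb 2 (1 + p q * g q / σ2) ≤
      τ * Real.logb 2 (1 + E * (Q.sup' hQ g) / (τ * σ2)) :=
  stmt6_general Q hQ g hg σ2 E τ hσ hτ τq p hτq hτsum hp hpE
end

section
/- Let K ≥ 1, let g : {1, …, K} → ℝ be nonnegative and nonincreasing (g_1 ≥ g_2 ≥ … ≥ g_K ≥ 0), and let E > 0, B > 0, T > 0, σ² > 0, L ≥ 0. Define F(S) := B·T·log₂(1 + E·Σ_{k∈S} g_k/(T·σ²)) + (K − |S|)·L for S ⊆ {1, …, K}. Let m* be the largest m ∈ {0, 1, …, K} such that for every j ∈ {1, …, m}, the activation condition B·T·log₂((T·σ² + E·Σ_{i=1}^{j} g_i)/(T·σ² + E·Σ_{i=1}^{j−1} g_i)) ≥ L holds. Then the prefix set S* = {1, …, m*} satisfies F(S*) ≥ F(S) for every S ⊆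 {1, …, K}. -/
/-! The rate of a set depends on it only through its size and its total gain, and among sets of
size `m` the prefix `{1, …, m}` has the largest total gain (an exchange argument), so it suffices
to compare prefixes. Writing `s n = g 1 + ⋯ + g n`, the increment from `{1, …, n}` to
`{1, …, n + 1}` is `B T log₂ (1 + E g (n + 1) / (T σ² + E s n)) - L`, which is nonincreasing in `n`
since `g` decreases while `s` increases. So `m ↦ F {1, …, m}` increases as long as the activation
condition holds and decreases from its first failure on, which by maximality is at `m* + 1`. -/

open Finset Real

theorem Finset.sum_le_sum_Icc_one_card {M : Type*} [AddCommMonoid M] [PartialOrder M]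
    [IsOrderedCancelAddMonoid M] {g : ℕ → M} {K : ℕ} (hg : AntitoneOn g (Set.Icc 1 K))
    {S : Finset ℕ} (hS : S ⊆ Icc 1 K) :
    ∑ k ∈ S, g k ≤ ∑ k ∈ Icc 1 #S, g k := by
  have hSK : #S ≤ K := by simpa using card_le_card hS
  rw [← sum_sdiff_le_sum_sdiff]
  calc ∑ k ∈ S \ Icc 1 #S, g k
      ≤ #(S \ Icc 1 #S) • g #S := by
        refine sum_le_card_nsmul _ _ _ fun x hx => ?_
        obtain ⟨hxS, hxP⟩ := mem_sdiff.1 hx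
        have hx1K := mem_Icc.1 (hS hxS)
        have hS1 : 1 ≤ #S := card_pos.2 ⟨x, hxS⟩
        simp only [mem_Icc, not_and, not_le] at hxP
        exact hg ⟨hS1, hSK⟩ ⟨hx1K.1, hx1K.2⟩ (hxP hx1K.1).le
    _ = #(Icc 1 #S \ S) • g #S := by rw [card_sdiff_comm (by simp)]
    _ ≤ ∑ k ∈ Icc 1 #S \ S, g k := by
        refine card_nsmul_le_sum _ _ _ fun y hy => ?_
        have hy := mem_Icc.1 (mem_sdiff.1 hy).1
        exact hg ⟨hy.1, hy.2.trans hSK⟩ ⟨hy.1.trans hy.2, hSK⟩ hy.2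

theorem apply_le_apply_of_le_succ_of_succ_le {α : Type*} [Preorder α] {u : ℕ → α}
    {p K m : ℕ} (hup : ∀ n < p, u n ≤ u (n + 1))
    (hdown : ∀ n, p ≤ n → n < K → u (n + 1) ≤ u n) (hm : m ≤ K) : u m ≤ u p := by
  rcases le_total m p with hmp | hpm
  · refine monotoneOn_of_le_succ Set.ordConnected_Iic (fun n _ _ hn => ?_)
      (Set.mem_Iic.2 hmp) (Set.mem_Iic.2 le_rfl) hmp
    exact hup n (Order.succ_le_iff.1 hn)
  · refine antitoneOn_of_succ_le Set.ordConnected_Icc (fun n _ hn hn' => ?_)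
      (Set.left_mem_Icc.2 (hpm.trans hm)) ⟨hpm, hm⟩ hpm
    exact hdown n hn.1 (Order.succ_le_iff.1 hn'.2)

theorem add_div_self_le_add_div_self {x y a b : ℝ} (hx : 0 < x) (hxy : x ≤ y) (hb : 0 ≤ b)
    (hba : b ≤ a) : (y + b) / y ≤ (x + a) / x := by
  rw [add_div, div_self (hx.trans_le hxy).ne', add_div, div_self hx.ne']
  gcongr
  exact hb.trans hba

theorem logb_one_add_div_sub_logb_one_add_div {b c x y : ℝ} (hc : 0 < c) (hx : 0 < c + x)
    (hy : 0 < c + y) :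
    logb b (1 + y / c) - logb b (1 + x / c) = logb b ((c + y) / (c + x)) := by
  have hdiv : ∀ z, 1 + z / c = (c + z) / c := fun z => by field_simp
  rw [hdiv, hdiv, logb_div hy.ne' hc.ne', logb_div hx.ne' hc.ne', logb_div hy.ne' hx.ne']
  ring

section PrefixSums

variable {g : ℕ → ℝ} {K : ℕ} {c E : ℝ}

-- The argument of `log₂` in the activation condition of device `n + 1`.
noncomputable def prefixGainRatio (c E : ℝ) (g : ℕ → ℝ) (n : ℕ) : ℝ :=
  (c + E * ∑ i ∈ Icc 1 (n + 1), g i) / (c + E * ∑ i ∈ Icc 1 n, g i)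

theorem sum_Icc_one_le_sum_Icc_one (hg : ∀ k ∈ Icc 1 K, 0 ≤ g k) {n m : ℕ} (hnm : n ≤ m)
    (hm : m ≤ K) : ∑ i ∈ Icc 1 n, g i ≤ ∑ i ∈ Icc 1 m, g i :=
  sum_le_sum_of_subset_of_nonneg (Icc_subset_Icc_right hnm) fun i hi _ =>
    hg i (Icc_subset_Icc_right hm hi)

theorem add_mul_sum_Icc_one_pos (hc : 0 < c) (hE : 0 ≤ E) (hg : ∀ k ∈ Icc 1 K, 0 ≤ g k)
    {n : ℕ} (hn : n ≤ K) : 0 < c + E * ∑ i ∈ Icc 1 n, g i :=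
  add_pos_of_pos_of_nonneg hc <| mul_nonneg hE <| sum_nonneg fun i hi =>
    hg i (Icc_subset_Icc_right hn hi)

theorem prefixGainRatio_le_prefixGainRatio (hc : 0 < c) (hE : 0 ≤ E) (hg : ∀ k ∈ Icc 1 K, 0 ≤ g k)
    (hanti : AntitoneOn g (Set.Icc 1 K)) {n m : ℕ} (hnm : n ≤ m) (hm : m < K) :
    prefixGainRatio c E g m ≤ prefixGainRatio c E g n := by
  unfold prefixGainRatio
  simp only [sum_Icc_succ_top (Nat.le_add_left 1 _), mul_add, ← add_assoc]
  refine add_div_self_le_add_div_self (add_mul_sum_Icc_one_pos hc hE hg (by omega))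
    (by have := sum_Icc_one_le_sum_Icc_one hg hnm hm.le; gcongr)
    (mul_nonneg hE (hg _ (by simp; omega))) (mul_le_mul_of_nonneg_left ?_ hE)
  exact hanti ⟨by omega, by omega⟩ ⟨by omega, by omega⟩ (by omega)

end PrefixSums

theorem stmt10_general (K : ℕ) (g : ℕ → ℝ)
    (hg : ∀ k ∈ Finset.Icc 1 K, 0 ≤ g k)
    (hmono : ∀ i j : ℕ, 1 ≤ i → i ≤ j → j ≤ K → g j ≤ g i)
    (E B T σ2 L : ℝ) (hE : 0 < E) (hB : 0 < B) (hT : 0 < T) (hσ : 0 < σ2)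
    (F : Finset ℕ → ℝ)
    (hF : ∀ S : Finset ℕ, F S =
      B * T * Real.logb 2 (1 + E * (∑ k ∈ S, g k) / (T * σ2)) +
        ((K : ℝ) - S.card) * L)
    (mstar : ℕ) (hm : mstar ≤ K)
    (hcond : ∀ j ∈ Finset.Icc 1 mstar,
      B * T * Real.logb 2 ((T * σ2 + E * ∑ i ∈ Finset.Icc 1 j, g i) /
        (T * σ2 + E * ∑ i ∈ Finset.Icc 1 (j - 1), g i)) ≥ L)
    (hmax : ∀ m : ℕ, m ≤ K →
      (∀ j ∈ Finset.Icc 1 m,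
        B * T * Real.logb 2 ((T * σ2 + E * ∑ i ∈ Finset.Icc 1 j, g i) /
          (T * σ2 + E * ∑ i ∈ Finset.Icc 1 (j - 1), g i)) ≥ L) → m ≤ mstar) :
    ∀ S ⊆ Finset.Icc 1 K, F S ≤ F (Finset.Icc 1 mstar) := by
  intro S hS
  set gain : ℕ → ℝ := fun n => B * T * logb 2 (prefixGainRatio (T * σ2) E g n) with hgain
  have hc : 0 < T * σ2 := by positivity
  have hanti : AntitoneOn g (Set.Icc 1 K) := fun i hi j hj hij => hmono i j hi.1 hij hj.2
  have hpos {n : ℕ} (hn : n ≤ K) := add_mul_sum_Icc_one_pos hc hE.le hg hn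
  have hstep {n : ℕ} (hn : n < K) : F (Icc 1 (n + 1)) - F (Icc 1 n) = gain n - L := by
    have := logb_one_add_div_sub_logb_one_add_div (b := 2) hc (hpos hn.le) (hpos hn)
    simp only [hF, Nat.card_Icc, hgain, prefixGainRatio, ← this]
    push_cast
    ring
  have hgain_anti {n m : ℕ} (hnm : n ≤ m) (hm : m < K) : gain m ≤ gain n := by
    have hratio := prefixGainRatio_le_prefixGainRatio hc hE.le hg hanti hnm hm
    have hratio_pos : 0 < prefixGainRatio (T * σ2) E g m := div_pos (hpos hm) (hpos hm.le)
    simp only [hgain]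
    gcongr
    exact one_lt_two
  have hactive (n : ℕ) (hn : n < mstar) : L ≤ gain n := by
    simpa [hgain, prefixGainRatio] using hcond (n + 1) (by simp; omega)
  have hinactive (hlt : mstar < K) : gain mstar < L := by
    by_contra! h
    have := hmax (mstar + 1) hlt fun j hj => ?_
    · omega
    obtain ⟨n, rfl⟩ : ∃ n, j = n + 1 := ⟨j - 1, by grind⟩
    have hn : n ≤ mstar := by simp only [mem_Icc] at hj; omega
    have : L ≤ gain n := hn.lt_or_eq.elim (hactive n) (· ▸ h)
    simpa [hgain, prefixGainRatio] using this
  calc F S ≤ F (Icc 1 #S) := by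
        have hsum := sum_le_sum_Icc_one_card hanti hS
        have hsum_nonneg : 0 ≤ ∑ k ∈ S, g k := sum_nonneg fun k hk => hg k (hS hk)
        rw [hF, hF, Nat.card_Icc, Nat.add_sub_cancel]
        gcongr
        exact one_lt_two
    _ ≤ F (Icc 1 mstar) := by
        refine apply_le_apply_of_le_succ_of_succ_le (u := fun m => F (Icc 1 m)) (fun n hn => ?_)
          (fun n hn hnK => ?_) (by simpa using card_le_card hS)
        · linarith [hstep (hn.trans_le hm), hactive n hn]
        · linarith [hstep hnK, hgain_anti hn hnK, hinactive (hn.trans_lt hnK)]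

/-- Proposition 1: in the homogeneous case (common energy budget `E` and
common local computing rate `L`), with devices indexed `1, …, K` so that the
channel gains `g` are nonincreasing, the greedy prefix set `{1, …, m*}`
produced by the successive refinement algorithm (where `m*` is the largest
`m ≤ K` such that the activation condition holds for every `j ≤ m`) maximizes
the total computation rate `F` over all subsets of `{1, …, K}`. -/
theorem stmt10 (K : ℕ) (hK : 1 ≤ K) (g : ℕ → ℝ)
    (hg : ∀ k ∈ Finset.Icc 1 K, 0 ≤ g k)
    (hmono : ∀ i j : ℕ, 1 ≤ i → i ≤ j → j ≤ K → g j ≤ g i)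
    (E B T σ2 L : ℝ) (hE : 0 < E) (hB : 0 < B) (hT : 0 < T) (hσ : 0 < σ2)
    (hL : 0 ≤ L) (F : Finset ℕ → ℝ)
    (hF : ∀ S : Finset ℕ, F S =
      B * T * Real.logb 2 (1 + E * (∑ k ∈ S, g k) / (T * σ2)) +
        ((K : ℝ) - S.card) * L)
    (mstar : ℕ) (hm : mstar ≤ K)
    (hcond : ∀ j ∈ Finset.Icc 1 mstar,
      B * T * Real.logb 2 ((T * σ2 + E * ∑ i ∈ Finset.Icc 1 j, g i) /
        (T * σ2 + E * ∑ i ∈ Finset.Icc 1 (j - 1), g i)) ≥ L)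
    (hmax : ∀ m : ℕ, m ≤ K →
      (∀ j ∈ Finset.Icc 1 m,
        B * T * Real.logb 2 ((T * σ2 + E * ∑ i ∈ Finset.Icc 1 j, g i) /
          (T * σ2 + E * ∑ i ∈ Finset.Icc 1 (j - 1), g i)) ≥ L) → m ≤ mstar) :
    ∀ S ⊆ Finset.Icc 1 K, F S ≤ F (Finset.Icc 1 mstar) :=
  stmt10_general K g hg hmono E B T σ2 L hE hB hT hσ F hF mstar hm hcond hmax
end
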